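/- arXiv:2309.13766 — 2 statements merged into one kernel-verified Lean document; each statement's English description precedes it below -/
import Mathlib

section
/- Hall-condition verification lemma: under the hypotheses that every patient is a beneficiary of at most b sparse categories and |B_c| ≥ min{q, b·r_c} for every category c (where c is sparse if |B_c| < q and q = Σ_c r_c), it holds that for every subset S of categories, |⋃_{c∈S} B_c| ≥ Σ_{c∈S} r_c. -/
/-
A category `c` with `q ≤ |B c|` settles Hall's condition for any `S ∋ c` on its own, since
`∑_{c ∈ S} r c ≤ q`. Otherwise every category of `S` is sparse, so `b · r c ≤ |B c|` on `S`
while every patient lies in at most `b` of the sets `B c`, `c ∈ S`; double counting the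
incidences between `S` and `⋃_{c ∈ S} B c` gives `b · ∑_{c ∈ S} r c ≤ b · |⋃_{c ∈ S} B c|`.
-/

open Finset

section

variable {ι κ : Type*} [DecidableEq ι] [Fintype κ] [DecidableEq κ]

theorem Finset.sum_card_le_mul_card_biUnion (s : Finset κ) (B : κ → Finset ι) {b : ℕ}
    (h : ∀ i ∈ s.biUnion B, #{c | c ∈ s ∧ i ∈ B c} ≤ b) :
    ∑ c ∈ s, #(B c) ≤ b * #(s.biUnion B) :=
  calc ∑ c ∈ s, #(B c) = ∑ i ∈ s.biUnion B, #{c | c ∈ s ∧ i ∈ B c} :=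
        sum_card_eq_sum_biUnion_card B s
    _ ≤ #(s.biUnion B) • b := sum_le_card_nsmul _ _ _ h
    _ = b * #(s.biUnion B) := by rw [smul_eq_mul, mul_comm]

theorem Finset.sum_le_card_biUnion_of_mul_le_card {s : Finset κ} {B : κ → Finset ι}
    {r : κ → ℕ} {b : ℕ} (hb : 0 < b) (hr : ∀ c ∈ s, b * r c ≤ #(B c))
    (h : ∀ i ∈ s.biUnion B, #{c | c ∈ s ∧ i ∈ B c} ≤ b) :
    ∑ c ∈ s, r c ≤ #(s.biUnion B) := by
  refine Nat.le_of_mul_le_mul_left ?_ hb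
  calc b * ∑ c ∈ s, r c = ∑ c ∈ s, b * r c := mul_sum _ _ _
    _ ≤ ∑ c ∈ s, #(B c) := sum_le_sum hr
    _ ≤ b * #(s.biUnion B) := sum_card_le_mul_card_biUnion s B h

end

open scoped Classical

theorem hall_condition_general {ι κ : Type*} [Fintype κ] [DecidableEq ι]
    (r : κ → ℕ) (B : κ → Finset ι) (b : ℕ) (hb : 0 < b)
    (hsparse : ∀ i : ι,
      (Finset.univ.filter fun c : κ => i ∈ B c ∧ (B c).card < ∑ c', r c').card ≤ b)
    (hB : ∀ c, min (∑ c', r c') (b * r c) ≤ (B c).card) :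
    ∀ S : Finset κ, ∑ c ∈ S, r c ≤ (S.biUnion B).card := by
  intro S
  by_cases hdense : ∃ c ∈ S, ∑ c', r c' ≤ #(B c)
  · obtain ⟨c, hc, hqc⟩ := hdense
    calc ∑ c ∈ S, r c ≤ ∑ c', r c' := sum_le_sum_of_subset (subset_univ S)
      _ ≤ #(B c) := hqc
      _ ≤ #(S.biUnion B) := card_le_card (subset_biUnion_of_mem B hc)
  · push Not at hdense
    refine sum_le_card_biUnion_of_mul_le_card hb
      (fun c hc => (min_le_iff.mp (hB c)).resolve_left (hdense c hc).not_ge)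
      (fun i _ => (card_le_card fun c hc => ?_).trans (hsparse i))
    simp only [mem_filter, mem_univ, true_and] at hc ⊢
    exact ⟨hc.2, hdense c hc.1⟩

/-- Hall-condition verification: if every patient is a beneficiary of at most `b` sparse
categories (`c` is sparse when `|B c| < q`, `q = ∑ c, r c`) and `|B c| ≥ min q (b * r c)`
for every category, then Hall's condition holds for every subset of categories. -/
theorem hall_condition {ι κ : Type*} [Fintype ι] [Fintype κ] [DecidableEq ι]
    (r : κ → ℕ) (B : κ → Finset ι) (b : ℕ) (hb : 0 < b) (hr : ∀ c, 0 < r c)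
    (hsparse : ∀ i : ι,
      (Finset.univ.filter fun c : κ => i ∈ B c ∧ (B c).card < ∑ c', r c').card ≤ b)
    (hB : ∀ c, min (∑ c', r c') (b * r c) ≤ (B c).card) :
    ∀ S : Finset κ, ∑ c ∈ S, r c ≤ (S.biUnion B).card :=
  hall_condition_general r B b hb hsparse hB
end

section
/- DAIM property 2 (stochastic dominance within categories): if μ' is the output of DAIM started from μ, then for every category c and every patient i, the number of patients j with j π_c i and μ'(j) = c is at least the number of patients j with j π_c i and μ(j) = c. -/
/-! Fix `c` and `i`. If every patient above `i` at `c` who is initially matched to `c` stays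
there, the count can only grow. Otherwise some such patient `j` is displaced; she is eligible
for `c` and ranks it first in the hypothetical market, so stability forces `c` to be full under
`μ'` with patients of priority at least `j`'s, hence above `i`. The prefix count under `μ'` is
then the whole count at `c`, which is at least the capacity `r c`, hence at least the count
under `μ`. -/

open scoped Classical

variable {ι κ : Type*} [Fintype ι] [Fintype κ]

/-- Number of patients matched to category `c` under matching `μ`. -/
noncomputable def matchCount (μ : ι → Option κ) (c : κ) : ℕ :=
  (Finset.univ.filter fun i => μ i = some c).card

/-- Number of matched patients under `μ`. -/
noncomputable def matchedCard (μ : ι → Option κ) : ℕ :=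
  (Finset.univ.filter fun i => μ i ≠ none).card

/-- Number of patients matched to a category of which they are a beneficiary. -/
noncomputable def benefCard (B : κ → Finset ι) (μ : ι → Option κ) : ℕ :=
  (Finset.univ.filter fun i => ∃ c, μ i = some c ∧ i ∈ B c).card

/-- `μ` respects the capacity (reserve) of every category. -/
def Caps (r : κ → ℕ) (μ : ι → Option κ) : Prop :=
  ∀ c, matchCount μ c ≤ r c

/-- `μ` complies with eligibility requirements. -/
def Complies (E : κ → Finset ι) (μ : ι → Option κ) : Prop :=
  ∀ i c, μ i = some c → i ∈ E c

/-- `μ` is a feasible eligibility-complying matching. -/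
def Valid (r : κ → ℕ) (E : κ → Finset ι) (μ : ι → Option κ) : Prop :=
  Caps r μ ∧ Complies E μ

/-- `μ` is maximal in resource allocation. -/
def MaxRes (r : κ → ℕ) (E : κ → Finset ι) (μ : ι → Option κ) : Prop :=
  Valid r E μ ∧ ∀ μ', Valid r E μ' → matchedCard μ' ≤ matchedCard μ

/-- `μ` is max-in-max: maximal in resource allocation and maximizing beneficiary
assignments among such matchings. -/
def MaxInMax (r : κ → ℕ) (E B : κ → Finset ι) (μ : ι → Option κ) : Prop :=
  MaxRes r E μ ∧ ∀ μ', MaxRes r E μ' → benefCard B μ' ≤ benefCard B μ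
/-- Eligible patients of category `c`: those strictly above the eligibility threshold
`η c` in the priority order (encoded by the rank function `πr c`, lower rank = higher
priority). -/
noncomputable def Elig (πr : κ → ι → ℕ) (η : κ → ℕ) (c : κ) : Finset ι :=
  Finset.univ.filter fun i => πr c i < η c

/-- Beneficiaries of category `c`: those strictly above the beneficiary threshold. -/
noncomputable def Benef (πr : κ → ι → ℕ) (β : κ → ℕ) (c : κ) : Finset ι :=
  Finset.univ.filter fun i => πr c i < β c

/-- Preference rank of category `c` for patient `i` in the hypothetical market built
from the initial matching `μ` and the precedence order `prec`: a patient ranks first the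
category she is initially matched to, and the remaining categories by precedence. -/
noncomputable def prank (prec : κ → ℕ) (μ : ι → Option κ) (i : ι) (c : κ) : ℕ :=
  if μ i = some c then 0 else prec c + 1

/-- `μ'` is a stable matching of the hypothetical two-sided market associated with the
initial matching `μ`: it is feasible, individually rational, and admits no blocking
pair. -/
def Stable (r : κ → ℕ) (πr : κ → ι → ℕ) (η : κ → ℕ) (prec : κ → ℕ)
    (μ μ' : ι → Option κ) : Prop :=
  Caps r μ' ∧ Complies (Elig πr η) μ' ∧
  ¬ ∃ i c, i ∈ Elig πr η c ∧
      (μ' i = none ∨ ∃ c', μ' i = some c' ∧ prank prec μ i c < prank prec μ i c') ∧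
      (matchCount μ' c < r c ∨ ∃ j, μ' j = some c ∧ πr c i < πr c j)

/-- `μ'` is the output of patient-proposing Deferred Acceptance with Initial Matching
`μ`: the patient-optimal stable matching of the hypothetical market. -/
def DAIMOutput (r : κ → ℕ) (πr : κ → ι → ℕ) (η : κ → ℕ) (prec : κ → ℕ)
    (μ μ' : ι → Option κ) : Prop :=
  Stable r πr η prec μ μ' ∧
  ∀ μ'', Stable r πr η prec μ μ'' →
    ∀ i c₂, μ'' i = some c₂ →
      ∃ c₁, μ' i = some c₁ ∧ prank prec μ i c₁ ≤ prank prec μ i c₂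

noncomputable def prefixCount {ι κ : Type*} [Fintype ι] (πr : κ → ι → ℕ) (μ : ι → Option κ)
    (c : κ) (i : ι) : ℕ :=
  (Finset.univ.filter fun j => πr c j < πr c i ∧ μ j = some c).card

theorem prefixCount_le_matchCount {ι κ : Type*} [Fintype ι] (πr : κ → ι → ℕ)
    (μ : ι → Option κ) (c : κ) (i : ι) :
    prefixCount πr μ c i ≤ matchCount μ c :=
  Finset.card_le_card <| Finset.monotone_filter_right _ fun _ _ hj => hj.2

theorem prefixCount_eq_matchCount {ι κ : Type*} [Fintype ι] {πr : κ → ι → ℕ}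
    {μ : ι → Option κ} {c : κ} {i : ι}
    (h : ∀ j, μ j = some c → πr c j < πr c i) :
    prefixCount πr μ c i = matchCount μ c := by
  unfold prefixCount matchCount
  congr 1
  exact Finset.filter_congr fun j _ => ⟨And.right, fun hj => ⟨h j hj, hj⟩⟩

theorem prefixCount_mono {ι κ : Type*} [Fintype ι] {πr : κ → ι → ℕ} {μ μ' : ι → Option κ}
    {c : κ} {i : ι}
    (h : ∀ j, πr c j < πr c i → μ j = some c → μ' j = some c) :
    prefixCount πr μ c i ≤ prefixCount πr μ' c i :=
  Finset.card_le_card <| Finset.monotone_filter_right _ fun j _ hj => ⟨hj.1, h j hj.1 hj.2⟩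

theorem prank_lt_of_initial {ι κ : Type*} {prec : κ → ℕ} {μ : ι → Option κ} {i : ι} {c c' : κ}
    (hc : μ i = some c) (hc' : c' ≠ c) : prank prec μ i c < prank prec μ i c' := by
  simp [prank, hc, hc'.symm]

theorem Stable.full_of_displaced {ι κ : Type*} [Fintype ι] {r : κ → ℕ} {πr : κ → ι → ℕ}
    {η prec : κ → ℕ}
    {μ μ' : ι → Option κ} (hst : Stable r πr η prec μ μ') (hμ : Complies (Elig πr η) μ)
    {j : ι} {c : κ} (hjμ : μ j = some c) (hjμ' : μ' j ≠ some c) :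
    r c ≤ matchCount μ' c ∧ ∀ k, μ' k = some c → πr c k ≤ πr c j := by
  have hprefers : μ' j = none ∨ ∃ c', μ' j = some c' ∧ prank prec μ j c < prank prec μ j c' := by
    rcases hc' : μ' j with _ | c'
    · exact Or.inl rfl
    · exact Or.inr ⟨c', rfl, prank_lt_of_initial hjμ fun h => hjμ' (h ▸ hc')⟩
  have hblock := fun hfree => hst.2.2 ⟨j, c, hμ j c hjμ, hprefers, hfree⟩
  exact ⟨not_lt.1 fun h => hblock (Or.inl h),
    fun k hk => not_lt.1 fun h => hblock (Or.inr ⟨k, hk, h⟩)⟩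

theorem daim_stochastic_dominance_general (r : κ → ℕ) (πr : κ → ι → ℕ) (η : κ → ℕ)
    (prec : κ → ℕ)
    (hπ : ∀ c, Function.Injective (πr c))
    (μ μ' : ι → Option κ) (hμ : Valid r (Elig πr η) μ)
    (hout : DAIMOutput r πr η prec μ μ') :
    ∀ c i, (Finset.univ.filter fun j => πr c j < πr c i ∧ μ j = some c).card ≤
      (Finset.univ.filter fun j => πr c j < πr c i ∧ μ' j = some c).card := by
  intro c i
  change prefixCount πr μ c i ≤ prefixCount πr μ' c i
  by_cases hkept : ∀ j, πr c j < πr c i → μ j = some c → μ' j = some c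
  · exact prefixCount_mono hkept
  push Not at hkept
  obtain ⟨j, hji, hjμ, hjμ'⟩ := hkept
  obtain ⟨hfull, habove⟩ := hout.1.full_of_displaced hμ.2 hjμ hjμ'
  have hprefix : ∀ k, μ' k = some c → πr c k < πr c i := fun k hk =>
    ((habove k hk).lt_of_ne fun h => hjμ' (hπ c h ▸ hk)).trans hji
  calc prefixCount πr μ c i ≤ matchCount μ c := prefixCount_le_matchCount πr μ c i
    _ ≤ r c := hμ.1 c
    _ ≤ matchCount μ' c := hfull
    _ = prefixCount πr μ' c i := (prefixCount_eq_matchCount hprefix).symm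

/-- DAIM property 2 (stochastic dominance within categories): for every category `c` and
patient `i`, the number of patients with higher priority than `i` matched to `c` under
the DAIM output is at least that under the initial matching. -/
theorem daim_stochastic_dominance (r : κ → ℕ) (πr : κ → ι → ℕ) (η : κ → ℕ)
    (prec : κ → ℕ)
    (hprec : Function.Injective prec) (hπ : ∀ c, Function.Injective (πr c))
    (μ μ' : ι → Option κ) (hμ : Valid r (Elig πr η) μ)
    (hout : DAIMOutput r πr η prec μ μ') :
    ∀ c i, (Finset.univ.filter fun j => πr c j < πr c i ∧ μ j = some c).card ≤
      (Finset.univ.filter fun j => πr c j < πr c i ∧ μ' j = some c).card :=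
  daim_stochastic_dominance_general r πr η prec hπ μ μ' hμ hout
end
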